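/- Let n ≥ 2, let a_1, …, a_n be real numbers, let g(x) = x^{n−1} + c_1 x^{n−2} + ⋯ + c_{n−1} be a real polynomial (with the conventions c_0 = 1 and c_i = 0 for i < 0 or i > n−1), and set ρ = c_1 + (a_1 + ⋯ + a_n). Let A be the n×n real matrix with diagonal (a_1,…,a_n), superdiagonal entries 1, last row (b_n, …, b_2, a_n), and zeros elsewhere. Then A has characteristic polynomial (x − ρ)·g(x) if and only if, for each j = 2, …, n, b_j = ∑_{i=0}^{j} K_{i,j}, where K_{i,j} = h_i(a_1,…,a_{n−j+1})·(c_1 c_{j−i−1} − c_{j−i}) + (a_1 + ⋯ + a_n)·h_{i−1}(a_1,…,a_{n−j+1})·c_{j−i}, and h_i denotes the i-th complete homogeneous symmetric function (with h_0 = 1 and h_i = 0 for i < 0). -/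

import Mathlib

open Polynomial

/-- The `n × n` matrix (indices `0, …, n-1` corresponding to `1, …, n`) with diagonal
`a 0, …, a (n-1)`, superdiagonal entries `1`, last row below the diagonal
`b n, b (n-1), …, b 2`, and zeros elsewhere. -/
def companionPlusDiag (n : ℕ) (a b : ℕ → ℝ) : Matrix (Fin n) (Fin n) ℝ :=
  fun i j =>
    if (i : ℕ) = (j : ℕ) then a (i : ℕ)
    else if (i : ℕ) + 1 = (j : ℕ) then 1
    else if (i : ℕ) = n - 1 then b (n - (j : ℕ))
    else 0

/-- The `i`-th complete homogeneous symmetric function of the first `j` variables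
`a 0, …, a (j-1)`, with `h_i = 0` for `i < 0` (the index `i` ranges over `ℤ`). -/
noncomputable def hsymmTruncZ (a : ℕ → ℝ) (j : ℕ) (i : ℤ) : ℝ :=
  if 0 ≤ i then
    ∑ d ∈ Finset.Nat.antidiagonalTuple j i.toNat, ∏ k : Fin j, a (k : ℕ) ^ d k
  else 0

/-- The quantity `K_{i,j} = h_i(a_1,…,a_{n−j+1})·(c_1 c_{j−i−1} − c_{j−i})
 + (a_1 + ⋯ + a_n)·h_{i−1}(a_1,…,a_{n−j+1})·c_{j−i}`. -/
noncomputable def Kcoef (n : ℕ) (a : ℕ → ℝ) (c : ℤ → ℝ) (i j : ℕ) : ℝ :=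
  hsymmTruncZ a (n - j + 1) (i : ℤ) * (c 1 * c ((j : ℤ) - i - 1) - c ((j : ℤ) - i)) +
    (∑ r ∈ Finset.range n, a r) * hsymmTruncZ a (n - j + 1) ((i : ℤ) - 1) * c ((j : ℤ) - i)

/-!
Expanding `det (X - A)` along its first column gives `χ_A = (X - a₁) χ' - b_n`, where `χ'` is
the characteristic polynomial of the same kind of matrix built from `a₂, …, a_n`. Hence
`χ_A = P_n - ∑_{j=2}^n b_j P_{n-j}` in the Newton basis `P_k = (X - a₁)⋯(X - a_k)`. Since
`X^N = ∑_k h_{N-k}(a₁, …, a_{k+1}) P_k`, the polynomial `(X - ρ) g` has the expansion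
`P_n - ∑_{j=2}^n (∑_i K_{i,j}) P_{n-j}`: the choice of `ρ` is what makes the coefficient of
`P_{n-1}` vanish. The `P_k` are monic of distinct degrees, so the coefficients must agree.
-/

open Finset

theorem Finset.Nat.sum_antidiagonalTuple_succ {R : Type*} [CommSemiring R] (k N : ℕ)
    (f : Fin (k + 1) → ℕ → R) :
    ∑ d ∈ Finset.Nat.antidiagonalTuple (k + 1) N, ∏ i, f i (d i) =
      ∑ p ∈ antidiagonal N, f 0 p.1 *
        ∑ d ∈ Finset.Nat.antidiagonalTuple k p.2, ∏ i : Fin k, f i.succ (d i) := by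
  simp_rw [Finset.mul_sum, Finset.sum_sigma']
  refine (Finset.sum_nbij' (fun x => Fin.cons x.1.1 x.2)
    (fun d => ⟨(d 0, ∑ i : Fin k, d i.succ), Fin.tail d⟩) ?_ ?_ ?_ ?_ ?_).symm
  · rintro ⟨⟨p, q⟩, d⟩ h
    simp_all [Nat.mem_antidiagonalTuple, Fin.sum_cons]
  · intro d hd
    simp_all [Nat.mem_antidiagonalTuple, Fin.sum_univ_succ, Fin.tail]
  · rintro ⟨⟨p, q⟩, d⟩ h
    simp_all [Nat.mem_antidiagonalTuple]
  · intro d _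
    exact Fin.cons_self_tail d
  · rintro ⟨⟨p, q⟩, d⟩ -
    simp [Fin.prod_univ_succ]

namespace hsymmTruncZ

variable (a : ℕ → ℝ) (k : ℕ)

theorem of_neg {i : ℤ} (hi : i < 0) : hsymmTruncZ a k i = 0 := by
  simp [hsymmTruncZ, hi.not_ge]

theorem natCast (N : ℕ) :
    hsymmTruncZ a k N = ∑ d ∈ Finset.Nat.antidiagonalTuple k N, ∏ i : Fin k, a i ^ d i := by
  simp [hsymmTruncZ]

theorem zero_right : hsymmTruncZ a k 0 = 1 := by
  simpa [Finset.Nat.antidiagonalTuple_zero_right] using natCast a k 0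

theorem zero_of_pos {i : ℤ} (hi : 0 < i) : hsymmTruncZ a 0 i = 0 := by
  lift i to ℕ using hi.le
  obtain ⟨N, rfl⟩ := Nat.exists_eq_add_one.mpr (by exact_mod_cast hi)
  rw [natCast, Finset.Nat.antidiagonalTuple_zero_succ, sum_empty]

theorem succ (i : ℤ) :
    hsymmTruncZ a (k + 1) i =
      hsymmTruncZ (fun j => a (j + 1)) k i + a 0 * hsymmTruncZ a (k + 1) (i - 1) := by
  rcases lt_trichotomy i 0 with hi | rfl | hi
  · simp [of_neg _ _ hi, of_neg _ _ (show i - 1 < 0 by omega)]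
  · rw [zero_right, zero_right, of_neg _ _ (by norm_num), mul_zero, add_zero]
  · obtain ⟨N, rfl⟩ : ∃ N : ℕ, i = N + 1 := ⟨(i - 1).toNat, by omega⟩
    rw [add_sub_cancel_right, ← Nat.cast_succ, natCast, natCast, natCast,
      Finset.Nat.sum_antidiagonalTuple_succ, Finset.Nat.sum_antidiagonalTuple_succ,
      Finset.Nat.antidiagonal_succ, sum_cons, sum_map, mul_sum]
    simp [pow_succ, mul_assoc, mul_left_comm, mul_sum]

theorem one_right : hsymmTruncZ a k 1 = ∑ r ∈ range k, a r := by
  induction k generalizing a with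
  | zero => exact zero_of_pos a one_pos
  | succ k ih => rw [succ, ih, sub_self, zero_right, mul_one, sum_range_succ']

end hsymmTruncZ

section NewtonBasis

variable {R : Type*} [CommRing R] [Nontrivial R]

noncomputable def newtonBasis (a : ℕ → R) : Polynomial.Sequence R where
  elems' k := Lagrange.nodal (range k) a
  degree_eq' k := by simp

theorem newtonBasis_apply (a : ℕ → R) (k : ℕ) :
    newtonBasis a k = Lagrange.nodal (range k) a :=
  rfl

@[simp]
theorem newtonBasis_zero (a : ℕ → R) : newtonBasis a 0 = 1 := rfl

theorem newtonBasis_succ (a : ℕ → R) (k : ℕ) :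
    newtonBasis a (k + 1) = (X - C (a 0)) * newtonBasis (fun i => a (i + 1)) k := by
  simp only [newtonBasis_apply, Lagrange.nodal, prod_range_succ', mul_comm]

end NewtonBasis

theorem sum_C_mul_newtonBasis_sub_inj {R : Type*} [CommRing R] [IsDomain R] (a : ℕ → R)
    {n : ℕ} {s : Finset ℕ} (hs : ∀ j ∈ s, j ≤ n) {u v : ℕ → R} :
    ∑ j ∈ s, C (u j) * newtonBasis a (n - j) = ∑ j ∈ s, C (v j) * newtonBasis a (n - j) ↔
      ∀ j ∈ s, u j = v j := by
  refine ⟨fun h => ?_, fun h => sum_congr rfl fun j hj => by rw [h j hj]⟩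
  have hinj : Set.InjOn (n - ·) s := fun i hi j hj hij => by
    have := hs i hi; have := hs j hj; simp only at hij; omega
  have hind := ((newtonBasis a).linearIndependent.linearIndepOn _).comp_of_image hinj
  simp only [← smul_eq_C_mul] at h
  exact linearIndepOn_finset_iffₛ.mp hind u v h

theorem X_pow_eq_sum_hsymmTruncZ_mul_newtonBasis (a : ℕ → ℝ) {N M : ℕ} (hNM : N ≤ M) :
    (X : ℝ[X]) ^ N =
      ∑ k ∈ range (M + 1), C (hsymmTruncZ a (k + 1) (N - k)) * newtonBasis a k := by
  induction N generalizing a M with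
  | zero =>
    rw [sum_range_succ', sum_eq_zero fun k _ => by
      rw [hsymmTruncZ.of_neg _ _ (by omega), C_0, zero_mul]]
    simp [hsymmTruncZ.zero_right]
  | succ N ih =>
    obtain ⟨M, rfl⟩ : ∃ M', M = M' + 1 := ⟨M - 1, by omega⟩
    have hsplit : ∀ k : ℕ, hsymmTruncZ a (k + 1) ((N + 1 : ℕ) - k) =
        hsymmTruncZ (fun j => a (j + 1)) k ((N + 1 : ℕ) - k) +
          a 0 * hsymmTruncZ a (k + 1) (N - k) := fun k => by
      rw [hsymmTruncZ.succ]; congr 3; push_cast; ring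
    calc (X : ℝ[X]) ^ (N + 1) = (X - C (a 0)) * X ^ N + C (a 0) * X ^ N := by ring
      _ = (X - C (a 0)) * ∑ k ∈ range (M + 1),
              C (hsymmTruncZ (fun j => a (j + 1)) (k + 1) (N - k)) *
                newtonBasis (fun j => a (j + 1)) k +
          C (a 0) * ∑ k ∈ range (M + 2),
            C (hsymmTruncZ a (k + 1) (N - k)) * newtonBasis a k := by
        rw [← ih _ (by omega), ← ih _ (by omega)]
      _ = ∑ k ∈ range (M + 1),
            C (hsymmTruncZ (fun j => a (j + 1)) (k + 1) (N - k)) * newtonBasis a (k + 1) +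
          ∑ k ∈ range (M + 2), C (a 0 * hsymmTruncZ a (k + 1) (N - k)) * newtonBasis a k := by
        rw [mul_sum, mul_sum]
        congr 1 <;> refine sum_congr rfl fun k _ => ?_
        · rw [newtonBasis_succ]; ring
        · rw [C_mul]; ring
      _ = _ := by
        simp_rw [hsplit, C_add, add_mul, sum_add_distrib]
        congr 1
        rw [sum_range_succ' _ (M + 1), hsymmTruncZ.zero_of_pos _ (by omega), C_0, zero_mul,
          add_zero]
        simp only [Nat.cast_add, Nat.cast_one, add_sub_add_right_eq_sub]

theorem X_pow_eq_sum_hsymmTruncZ_mul_newtonBasis_sub (a : ℕ → ℝ) {N n : ℕ} (hN : N ≤ n) :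
    (X : ℝ[X]) ^ N = ∑ m ∈ range (n + 1),
      C (hsymmTruncZ a (n - m + 1) (N + m - n)) * newtonBasis a (n - m) := by
  rw [X_pow_eq_sum_hsymmTruncZ_mul_newtonBasis a hN, ← sum_range_reflect]
  refine sum_congr rfl fun m hm => ?_
  have hm := mem_range.mp hm
  rw [show n + 1 - 1 - m = n - m by omega, show (N : ℤ) - (n - m : ℕ) = N + m - n by omega]

theorem Matrix.charmatrix_submatrix {R m n : Type*} [CommRing R] [Fintype m] [Fintype n]
    [DecidableEq m] [DecidableEq n] (M : Matrix n n R) {e : m → n} (he : Function.Injective e) :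
    M.charmatrix.submatrix e e = (M.submatrix e e).charmatrix := by
  ext i j
  simp [Matrix.charmatrix_apply, Matrix.diagonal_apply, he.eq_iff]

theorem companionPlusDiag_submatrix_succ (n : ℕ) (a b : ℕ → ℝ) :
    (companionPlusDiag (n + 1) a b).submatrix Fin.succ Fin.succ =
      companionPlusDiag n (fun i => a (i + 1)) b := by
  ext i j
  simp only [Matrix.submatrix_apply, companionPlusDiag, Fin.val_succ]
  grind

theorem det_charmatrix_companionPlusDiag_submatrix_castSucc_succ (n : ℕ) (a b : ℕ → ℝ) :
    ((companionPlusDiag (n + 1) a b).charmatrix.submatrix Fin.castSucc Fin.succ).det =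
      (-1) ^ n := by
  have hne {i j : Fin n} (hij : i ≤ j) : i.castSucc ≠ j.succ := by
    rw [Ne, Fin.ext_iff]; simp only [Fin.val_castSucc, Fin.val_succ]; omega
  rw [Matrix.det_of_isLowerTriangular]
  · simp [Matrix.charmatrix_apply_ne _ _ _ (hne le_rfl), companionPlusDiag]
  · intro i j (hij : i < j)
    have : (i : ℕ) < j := hij
    simp only [Matrix.submatrix_apply, Matrix.charmatrix_apply_ne _ _ _ (hne hij.le), neg_eq_zero,
      C_eq_zero, companionPlusDiag, Fin.val_castSucc, Fin.val_succ]
    split_ifs <;> first | rfl | omega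

theorem charpoly_companionPlusDiag_succ {n : ℕ} (hn : 1 ≤ n) (a b : ℕ → ℝ) :
    (companionPlusDiag (n + 1) a b).charpoly =
      (X - C (a 0)) * (companionPlusDiag n (fun i => a (i + 1)) b).charpoly - C (b (n + 1)) := by
  have hlast : (Fin.last n : Fin (n + 1)) ≠ 0 := by
    rw [Ne, Fin.ext_iff, Fin.val_last, Fin.val_zero]; omega
  have hcol {i : Fin (n + 1)} (h0 : i ≠ 0) (hl : i ≠ Fin.last n) :
      (companionPlusDiag (n + 1) a b).charmatrix i 0 = 0 := by
    have h0' : (i : ℕ) ≠ 0 := fun h => h0 (Fin.ext h)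
    have hl' : (i : ℕ) ≠ n := fun h => hl (Fin.ext h)
    rw [Matrix.charmatrix_apply_ne _ _ _ h0, companionPlusDiag, Fin.val_zero,
      if_neg h0', if_neg (by omega), if_neg (by omega), C_0, neg_zero]
  rw [Matrix.charpoly, Matrix.det_succ_column_zero, sum_eq_add 0 (Fin.last n) hlast.symm
    (fun i _ hi => by rw [hcol hi.1 hi.2, mul_zero, zero_mul]) (by simp) (by simp)]
  rw [Fin.succAbove_zero, Fin.succAbove_last,
    det_charmatrix_companionPlusDiag_submatrix_castSucc_succ,
    Matrix.charmatrix_submatrix _ (Fin.succ_injective _), companionPlusDiag_submatrix_succ,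
    Matrix.charmatrix_apply_eq, Matrix.charmatrix_apply_ne _ _ _ hlast]
  have hb : companionPlusDiag (n + 1) a b (Fin.last n) 0 = b (n + 1) := by
    rw [companionPlusDiag, Fin.val_last, Fin.val_zero, if_neg (by omega), if_neg (by omega),
      if_pos (by omega), Nat.sub_zero]
  rw [hb, show companionPlusDiag (n + 1) a b 0 0 = a 0 from if_pos rfl, Fin.val_zero,
    Fin.val_last, pow_zero, one_mul, mul_right_comm, ← mul_pow, neg_one_mul, neg_neg, one_pow,
    one_mul, ← sub_eq_add_neg, Matrix.charpoly]

theorem charpoly_companionPlusDiag {n : ℕ} (hn : 1 ≤ n) (a b : ℕ → ℝ) :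
    (companionPlusDiag n a b).charpoly =
      newtonBasis a n - ∑ m ∈ Icc 2 n, C (b m) * newtonBasis a (n - m) := by
  induction n, hn using Nat.le_induction generalizing a with
  | base => simp [Matrix.charpoly, Matrix.det_unique, companionPlusDiag, newtonBasis_succ]
  | succ n hn ih =>
    rw [charpoly_companionPlusDiag_succ hn, ih, sum_Icc_succ_top (by omega), Nat.sub_self,
      newtonBasis_zero, mul_one, newtonBasis_succ a n, mul_sub, mul_sum, sub_sub]
    congr 2
    refine sum_congr rfl fun m hm => ?_
    rw [show n + 1 - m = n - m + 1 by grind, newtonBasis_succ]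
    ring

theorem sum_range_mul_sub_comm {R : Type*} [CommSemiring R] {f g : ℤ → R}
    (hf : ∀ i < 0, f i = 0) (hg : ∀ i < 0, g i = 0) {M : ℤ} {p q : ℕ} (hp : M < p)
    (hq : M < q) :
    ∑ i ∈ range p, f i * g (M - i) = ∑ j ∈ range q, g j * f (M - j) := by
  have htrunc {u v : ℤ → R} (hv : ∀ i < 0, v i = 0) {p : ℕ} (hp : M < p) :
      ∑ i ∈ range p, u i * v (M - i) = ∑ i ∈ range (M + 1).toNat, u i * v (M - i) := by
    refine (sum_subset (range_subset_range.mpr (by omega)) fun i hi hi' => ?_).symm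
    rw [hv _ (by rw [mem_range] at hi'; omega), mul_zero]
  rw [htrunc hg hp, htrunc hf hq, ← sum_range_reflect]
  refine sum_congr rfl fun j hj => ?_
  have hj := mem_range.mp hj
  rw [mul_comm, show (((M + 1).toNat - 1 - j : ℕ) : ℤ) = M - j by omega, sub_sub_cancel]

section Kcoef

variable {n : ℕ} (a : ℕ → ℝ) {c : ℤ → ℝ}

theorem sum_Kcoef_eq (hcneg : ∀ i : ℤ, i < 0 → c i = 0) (hcn : c n = 0) {m : ℕ}
    (hm : m ≤ n) :
    ∑ i ∈ range (m + 1), Kcoef n a c i m =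
      (c 1 + ∑ r ∈ range n, a r) *
          ∑ t ∈ range n, c t * hsymmTruncZ a (n - m + 1) (m - 1 - t) -
        ∑ t ∈ range n, c t * hsymmTruncZ a (n - m + 1) (m - t) := by
  set H := hsymmTruncZ a (n - m + 1)
  have hH : ∀ i < 0, H i = 0 := fun i hi => hsymmTruncZ.of_neg a _ hi
  have hH' : ∀ i < 0, H (i - 1) = 0 := fun i hi => hH _ (by omega)
  have hext (M : ℤ) :
      ∑ t ∈ range n, c t * H (M - t) = ∑ t ∈ range (n + 1), c t * H (M - t) := by
    rw [sum_range_succ, hcn, zero_mul, add_zero]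
  calc ∑ i ∈ range (m + 1), Kcoef n a c i m
      = c 1 * ∑ i ∈ range (m + 1), H i * c (m - 1 - i) -
          ∑ i ∈ range (m + 1), H i * c (m - i) +
          (∑ r ∈ range n, a r) * ∑ i ∈ range (m + 1), H (i - 1) * c (m - i) := by
        simp only [Kcoef, mul_sum, ← sum_sub_distrib, ← sum_add_distrib]
        refine sum_congr rfl fun i _ => ?_
        rw [sub_right_comm]
        ring
    _ = _ := by
      rw [sum_range_mul_sub_comm hH hcneg (q := n + 1) (by omega) (by omega),
        sum_range_mul_sub_comm hH hcneg (q := n + 1) (by omega) (by omega),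
        sum_range_mul_sub_comm hH' hcneg (q := n + 1) (by omega) (by omega), hext, hext]
      simp only [sub_right_comm _ _ (1 : ℤ)]
      ring

theorem sum_Kcoef_zero (hc0 : c 0 = 1) (hcneg : ∀ i : ℤ, i < 0 → c i = 0) :
    ∑ i ∈ range 1, Kcoef n a c i 0 = -1 := by
  simp [Kcoef, hsymmTruncZ.zero_right, hsymmTruncZ.of_neg, hc0, hcneg]

theorem sum_Kcoef_one (hn : 1 ≤ n) (hc0 : c 0 = 1) (hcneg : ∀ i : ℤ, i < 0 → c i = 0) :
    ∑ i ∈ range 2, Kcoef n a c i 1 = 0 := by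
  simp [sum_range_succ, Kcoef, hsymmTruncZ.zero_right, hsymmTruncZ.of_neg,
    hsymmTruncZ.one_right, Nat.sub_add_cancel hn, hc0, hcneg]

theorem X_sub_C_mul_eq_neg_sum_Kcoef (hn : 1 ≤ n) (hc0 : c 0 = 1)
    (hcneg : ∀ i : ℤ, i < 0 → c i = 0) (hctop : ∀ i : ℤ, (n : ℤ) - 1 < i → c i = 0) :
    (X - C (c 1 + ∑ r ∈ range n, a r)) *
        (X ^ (n - 1) + ∑ i ∈ Icc 1 (n - 1), C (c (i : ℤ)) * X ^ (n - 1 - i)) =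
      -∑ m ∈ range (n + 1),
        C (∑ i ∈ range (m + 1), Kcoef n a c i m) * newtonBasis a (n - m) := by
  set ρ := c 1 + ∑ r ∈ range n, a r with hρ
  have hg : (X : ℝ[X]) ^ (n - 1) + ∑ i ∈ Icc 1 (n - 1), C (c i) * X ^ (n - 1 - i) =
      ∑ t ∈ range n, C (c t) * X ^ (n - 1 - t) := by
    rw [range_eq_Ico, sum_eq_sum_Ico_succ_bot (by omega), ← Ico_add_one_right_eq_Icc,
      Nat.sub_add_cancel hn, Nat.cast_zero, hc0, C_1, one_mul, Nat.sub_zero]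
  calc (X - C ρ) * (X ^ (n - 1) + ∑ i ∈ Icc 1 (n - 1), C (c (i : ℤ)) * X ^ (n - 1 - i))
      = ∑ t ∈ range n, (C (c t) * X ^ (n - t) - C (ρ * c t) * X ^ (n - 1 - t)) := by
        rw [hg, mul_sum]
        refine sum_congr rfl fun t ht => ?_
        rw [show n - t = n - 1 - t + 1 by have := mem_range.mp ht; omega, C_mul]
        ring
    _ = ∑ t ∈ range n, ∑ m ∈ range (n + 1),
          C (c t * hsymmTruncZ a (n - m + 1) (m - t) -
            ρ * (c t * hsymmTruncZ a (n - m + 1) (m - 1 - t))) * newtonBasis a (n - m) := by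
        refine sum_congr rfl fun t ht => ?_
        have ht := mem_range.mp ht
        rw [X_pow_eq_sum_hsymmTruncZ_mul_newtonBasis_sub a (N := n - t) (n := n) (by omega),
          X_pow_eq_sum_hsymmTruncZ_mul_newtonBasis_sub a (N := n - 1 - t) (n := n) (by omega),
          mul_sum, mul_sum, ← sum_sub_distrib]
        refine sum_congr rfl fun m hm => ?_
        have hm := mem_range.mp hm
        rw [show ((n - t : ℕ) : ℤ) + m - n = m - t by omega,
          show ((n - 1 - t : ℕ) : ℤ) + m - n = m - 1 - t by omega]
        simp only [C_sub, C_mul]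
        ring
    _ = _ := by
      rw [sum_comm, ← sum_neg_distrib]
      refine sum_congr rfl fun m hm => ?_
      rw [sum_Kcoef_eq a hcneg (hctop n (by omega)) (by have := mem_range.mp hm; omega),
        ← sum_mul, ← map_sum, ← neg_mul, ← C_neg, sum_sub_distrib, ← mul_sum, hρ,
        neg_sub]

theorem X_sub_C_mul_eq_newtonBasis_sub_sum_Kcoef (hn : 1 ≤ n) (hc0 : c 0 = 1)
    (hcneg : ∀ i : ℤ, i < 0 → c i = 0) (hctop : ∀ i : ℤ, (n : ℤ) - 1 < i → c i = 0) :
    (X - C (c 1 + ∑ r ∈ range n, a r)) *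
        (X ^ (n - 1) + ∑ i ∈ Icc 1 (n - 1), C (c (i : ℤ)) * X ^ (n - 1 - i)) =
      newtonBasis a n -
        ∑ m ∈ Icc 2 n,
          C (∑ i ∈ range (m + 1), Kcoef n a c i m) * newtonBasis a (n - m) := by
  rw [X_sub_C_mul_eq_neg_sum_Kcoef a hn hc0 hcneg hctop, range_eq_Ico,
    ← sum_Ico_consecutive _ (Nat.zero_le 2) (by omega : 2 ≤ n + 1), Ico_add_one_right_eq_Icc,
    ← range_eq_Ico, sum_range_succ, sum_range_one, sum_Kcoef_zero a hc0 hcneg,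
    sum_Kcoef_one a hn hc0 hcneg]
  simp only [C_neg, C_1, C_0, Nat.sub_zero]
  ring

end Kcoef

/-- The companion-plus-diagonal matrix has characteristic polynomial
`(x − ρ)·g(x)`, where `g(x) = x^{n−1} + c_1 x^{n−2} + ⋯ + c_{n−1}` and
`ρ = c_1 + (a_1 + ⋯ + a_n)`, if and only if `b_j = ∑_{i=0}^j K_{i,j}` for each
`j = 2, …, n`. -/
theorem charpoly_eq_iff_b_eq_sum_K (n : ℕ) (hn : 2 ≤ n) (a b : ℕ → ℝ) (c : ℤ → ℝ)
    (hc0 : c 0 = 1) (hcneg : ∀ i : ℤ, i < 0 → c i = 0)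
    (hctop : ∀ i : ℤ, (n : ℤ) - 1 < i → c i = 0) :
    (companionPlusDiag n a b).charpoly =
        (X - C (c 1 + ∑ r ∈ Finset.range n, a r)) *
          (X ^ (n - 1) + ∑ i ∈ Finset.Icc 1 (n - 1), C (c (i : ℤ)) * X ^ (n - 1 - i)) ↔
      ∀ j ∈ Finset.Icc 2 n, b j = ∑ i ∈ Finset.range (j + 1), Kcoef n a c i j := by
  rw [charpoly_companionPlusDiag (by omega),
    X_sub_C_mul_eq_newtonBasis_sub_sum_Kcoef a (by omega) hc0 hcneg hctop, sub_right_inj]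
  exact sum_C_mul_newtonBasis_sub_inj a fun j hj => (mem_Icc.mp hj).2
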